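/- Let M be an MDP in reachability form with matrices A and T as above, δ_in Dirac, λ ∈ ℝ^k. Then every scheduler σ satisfies ⋁_{i=1}^k Pr^σ(◇G_i) ≤ λ_i if and only if there exist x ∈ ℝ^S and z ∈ ℝ^k with z ≥ 0, z ≠ 0, A x ≥ T z, and x(s_in) ≤ λᵀ z. -/

import Mathlib

open Finset

structure MDP (S A : Type) [Fintype S] [Fintype A] where
  init : S
  trans : S → A → Option (S → ℝ)
  nonneg' : ∀ s a f, trans s a = some f → ∀ t, 0 ≤ f t
  sum_one' : ∀ s a f, trans s a = some f → ∑ t, f t = 1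
  exists_enabled : ∀ s, ∃ a, (trans s a).isSome

namespace MDP

variable {S A : Type} [Fintype S] [Fintype A]

/-- action `a` is enabled in state `s`. -/
def enabled (M : MDP S A) (s : S) (a : A) : Prop := (M.trans s a).isSome

/-- transition probability (0 if the action is not enabled). -/
noncomputable def prob (M : MDP S A) (s : S) (a : A) (t : S) : ℝ :=
  ((M.trans s a).getD 0) t

/-- A (history-dependent, randomized) scheduler. -/
structure Scheduler (M : MDP S A) where
  choice : List (S × A) → S → A → ℝ
  choice_nonneg : ∀ h s a, 0 ≤ choice h s a
  choice_sum_one : ∀ h s, ∑ a, choice h s a = 1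
  choice_support : ∀ h s a, choice h s a ≠ 0 → M.enabled s a

variable [DecidableEq S]

/-- probability of reaching `G` within `n` steps, from history `h` and current state `s`. -/
noncomputable def reachAux (M : MDP S A) (σ : Scheduler M) (G : Finset S) :
    ℕ → List (S × A) → S → ℝ
  | 0, _, s => if s ∈ G then 1 else 0
  | n + 1, h, s =>
      if s ∈ G then 1
      else ∑ a : A, σ.choice h s a * ∑ t : S, M.prob s a t * reachAux M σ G n (h ++ [(s, a)]) t

/-- probability of eventually reaching `G`, starting in `s`. -/
noncomputable def prReachFrom (M : MDP S A) (σ : Scheduler M) (G : Finset S) (s : S) : ℝ :=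
  ⨆ n : ℕ, reachAux M σ G n [] s

/-- probability of eventually reaching `G` from the initial state. -/
noncomputable def prReach (M : MDP S A) (σ : Scheduler M) (G : Finset S) : ℝ :=
  prReachFrom M σ G M.init

/-- probability of staying in `G` for the first `n` steps. -/
noncomputable def invAux (M : MDP S A) (σ : Scheduler M) (G : Finset S) :
    ℕ → List (S × A) → S → ℝ
  | 0, _, s => if s ∈ G then 1 else 0
  | n + 1, h, s =>
      if s ∈ G then
        ∑ a : A, σ.choice h s a * ∑ t : S, M.prob s a t * invAux M σ G n (h ++ [(s, a)]) t
      else 0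

/-- probability of always remaining in `G`, from the initial state. -/
noncomputable def prInv (M : MDP S A) (σ : Scheduler M) (G : Finset S) : ℝ :=
  ⨅ n : ℕ, invAux M σ G n [] M.init

/-- expected total reward collected in the first `n` steps. -/
noncomputable def expTotal (M : MDP S A) (σ : Scheduler M) (r : S → A → ℝ) :
    ℕ → List (S × A) → S → ℝ
  | 0, _, _ => 0
  | n + 1, h, s =>
      ∑ a : A, σ.choice h s a *
        (r s a + ∑ t : S, M.prob s a t * expTotal M σ r n (h ++ [(s, a)]) t)

/-- expected (liminf) mean payoff under scheduler `σ`. -/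
noncomputable def expMPinf (M : MDP S A) (σ : Scheduler M) (r : S → A → ℝ) : ℝ :=
  Filter.liminf (fun n : ℕ => expTotal M σ r n [] M.init / n) Filter.atTop

/-- expected (limsup) mean payoff under scheduler `σ`. -/
noncomputable def expMPsup (M : MDP S A) (σ : Scheduler M) (r : S → A → ℝ) : ℝ :=
  Filter.limsup (fun n : ℕ => expTotal M σ r n [] M.init / n) Filter.atTop

/-- `M'` (with fresh sink `⊥ = none`) is a subsystem of `M` with state set `S' ∪ {⊥}`. -/
def IsSubsystem (M : MDP S A) (S' : Finset S) (M' : MDP (Option S) A) : Prop :=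
  M.init ∈ S' ∧ M'.init = some M.init ∧
  (∀ a, M'.enabled none a → ∀ t, M'.prob none a t = if t = none then 1 else 0) ∧
  (∀ s ∈ S', ∀ a, (M'.enabled (some s) a ↔ M.enabled s a)) ∧
  (∀ s ∈ S', ∀ t ∈ S', ∀ a,
    M'.prob (some s) a (some t) = M.prob s a t ∨ M'.prob (some s) a (some t) = 0) ∧
  (∀ s ∈ S', ∀ t, t ∉ S' → ∀ a, M'.prob (some s) a (some t) = 0)

/-- `M'` is the subsystem of `M` induced by `S'`: transitions leaving `S'` are
redirected to the absorbing sink `⊥ = none`. -/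
def IsInducedSubsystem (M : MDP S A) (S' : Finset S) (M' : MDP (Option S) A) : Prop :=
  M.init ∈ S' ∧ M'.init = some M.init ∧
  (∀ a, M'.enabled none a → ∀ t, M'.prob none a t = if t = none then 1 else 0) ∧
  (∀ s ∈ S', ∀ a, (M'.enabled (some s) a ↔ M.enabled s a)) ∧
  (∀ s ∈ S', ∀ t ∈ S', ∀ a, M'.prob (some s) a (some t) = M.prob s a t) ∧
  (∀ s ∈ S', ∀ t, t ∉ S' → ∀ a, M'.prob (some s) a (some t) = 0) ∧
  (∀ s ∈ S', ∀ a, M.enabled s a → M'.prob (some s) a none = ∑ t ∈ S'ᶜ, M.prob s a t)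

/-- `C` is an end component of `M`. -/
def IsEC (M : MDP S A) (C : Finset (S × A)) : Prop :=
  C.Nonempty ∧ (∀ p ∈ C, M.enabled p.1 p.2) ∧
  (∀ p ∈ C, ∀ t, 0 < M.prob p.1 p.2 t → t ∈ C.image Prod.fst) ∧
  (∀ s ∈ C.image Prod.fst, ∀ t ∈ C.image Prod.fst,
    Relation.ReflTransGen (fun u v => ∃ a, (u, a) ∈ C ∧ 0 < M.prob u a v) s t)

end MDP

/-- positive boolean combinations of lower-bounded reachability and invariance
predicates; the flag `strict` distinguishes `>` from `≥`. -/
inductive MOProp (S : Type) where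
  | reach (G : Finset S) (lam : ℝ) (strict : Bool)
  | invar (G : Finset S) (lam : ℝ) (strict : Bool)
  | conj (p q : MOProp S)
  | disj (p q : MOProp S)

namespace MDP

variable {S A : Type} [Fintype S] [Fintype A] [DecidableEq S]

/-- satisfaction of a multi-objective property in `M` under `σ`. -/
def Sat (M : MDP S A) (σ : Scheduler M) : MOProp S → Prop
  | .reach G lam strict => if strict then lam < prReach M σ G else lam ≤ prReach M σ G
  | .invar G lam strict => if strict then lam < prInv M σ G else lam ≤ prInv M σ G
  | .conj p q => Sat M σ p ∧ Sat M σ q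
  | .disj p q => Sat M σ p ∨ Sat M σ q

/-- satisfaction of a multi-objective property (over the original state space) in a
subsystem `M'` with sink `⊥ = none`. -/
def SatSub (M' : MDP (Option S) A) (σ : Scheduler M') : MOProp S → Prop
  | .reach G lam strict =>
      if strict then lam < prReach M' σ (G.image some) else lam ≤ prReach M' σ (G.image some)
  | .invar G lam strict =>
      if strict then lam < prInv M' σ (G.image some) else lam ≤ prInv M' σ (G.image some)
  | .conj p q => SatSub M' σ p ∧ SatSub M' σ q
  | .disj p q => SatSub M' σ p ∨ SatSub M' σ q

end MDP

/-!
Soundness: extend `x` to `F` by `s ↦ ∑ {zᵢ | s ∈ Gᵢ}`. The certificate then says that this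
vector `u` is superharmonic outside `F`; it is nonnegative because `F` is reachable from every
state (a negative minimum of `u` would be attained on a trap avoiding `F`), so by induction on the
horizon it dominates `∑ᵢ zᵢ Pr^σ(◇Gᵢ)` for every scheduler `σ`. Together with `x(s_in) ≤ λᵀz`,
`z ≥ 0` and `z ≠ 0` this excludes `Pr^σ(◇Gᵢ) > λᵢ` for all `i`.

Completeness: if there is no certificate, Farkas' lemma yields `y ≥ 0` on the state-action pairs
outside `F` and `v ≥ 0` with `yᵀ(I - P) ≤ v·δ_in` on `Fᶜ` and `v λᵢ < yᵀ P(·, Gᵢ)`. The memoryless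
scheduler choosing actions in proportion to `y` satisfies `yᵀ P(·, Gᵢ) ≤ v Pr^σ(◇Gᵢ)`: multiply
the Bellman equation of `Pr^σ(◇Gᵢ)` by the outflow of `y` and sum over all states. This forces
`v > 0` and `Pr^σ(◇Gᵢ) > λᵢ` for all `i`. Farkas' lemma itself rests on the closedness of finitely
generated cones, proved by Carathéodory's reduction to linearly independent generators.
-/

namespace PointedCone

variable {ι E : Type*} [AddCommGroup E] [Module ℝ E]

theorem mem_hull_image_finset_iff {a : ι → E} {s : Finset ι} {x : E} :
    x ∈ hull ℝ (a '' s) ↔ ∃ μ : ι → ℝ, (∀ i ∈ s, 0 ≤ μ i) ∧ ∑ i ∈ s, μ i • a i = x := by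
  rw [hull, Submodule.mem_span_image_finset_iff_exists_fun']
  constructor
  · rintro ⟨c, rfl⟩
    exact ⟨fun i => c i, fun i _ => (c i).2, by simp⟩
  · rintro ⟨μ, hμ, rfl⟩
    refine ⟨fun i => ⟨max (μ i) 0, le_max_right _ _⟩, sum_congr rfl fun i hi => ?_⟩
    simp [Nonneg.mk_smul, max_eq_left (hμ i hi)]

theorem mem_hull_range_iff [Fintype ι] {a : ι → E} {x : E} :
    x ∈ hull ℝ (Set.range a) ↔ ∃ μ : ι → ℝ, 0 ≤ μ ∧ ∑ i, μ i • a i = x := by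
  rw [← Set.image_univ, ← coe_univ, mem_hull_image_finset_iff]
  simp [Pi.le_def]

theorem exists_mem_hull_image_erase_of_not_linearIndepOn [DecidableEq ι] {a : ι → E}
    {s : Finset ι} (hs : ¬ LinearIndepOn ℝ a s) {x : E} (hx : x ∈ hull ℝ (a '' s)) :
    ∃ j ∈ s, x ∈ hull ℝ (a '' ↑(s.erase j)) := by
  obtain ⟨μ, hμ, rfl⟩ := mem_hull_image_finset_iff.mp hx
  obtain ⟨g, hg, hpos⟩ :
      ∃ g : ι → ℝ, ∑ i ∈ s, g i • a i = 0 ∧ (s.filter (0 < g ·)).Nonempty := by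
    obtain ⟨g, hg, i, his, hgi⟩ := not_linearIndepOn_finset_iff.mp hs
    rcases hgi.lt_or_gt with hneg | hpos
    · exact ⟨-g, by simp [neg_smul, hg], i, by simp [his, hneg]⟩
    · exact ⟨g, hg, i, by simp [his, hpos]⟩
  -- move along the relation `g` until the first coefficient vanishes
  obtain ⟨j, hj, hmin⟩ := (s.filter (0 < g ·)).exists_min_image (fun i => μ i / g i) hpos
  rw [mem_filter] at hj
  set T := μ j / g j
  have hT : 0 ≤ T := div_nonneg (hμ j hj.1) hj.2.le
  refine ⟨j, hj.1, mem_hull_image_finset_iff.mpr ⟨fun i => μ i - T * g i, fun i hi => ?_, ?_⟩⟩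
  · have his := (mem_erase.mp hi).2
    rcases le_or_gt (g i) 0 with hgi | hgi
    · nlinarith [hμ i his]
    · have := hmin i (mem_filter.mpr ⟨his, hgi⟩)
      rw [le_div_iff₀ hgi] at this
      linarith
  · rw [sum_erase s (by simp [T, div_mul_cancel₀ _ hj.2.ne'])]
    simp [sub_smul, sum_sub_distrib, mul_smul, ← smul_sum, hg]

variable [TopologicalSpace E] [IsTopologicalAddGroup E] [ContinuousSMul ℝ E] [T2Space E]

theorem isClosed_hull_range_of_linearIndependent [Fintype ι] {a : ι → E}
    (ha : LinearIndependent ℝ a) : IsClosed (hull ℝ (Set.range a) : Set E) := by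
  let L := Fintype.linearCombination ℝ a
  have hL := LinearMap.isClosedEmbedding_of_injective
    (LinearMap.ker_eq_bot.mpr (linearIndependent_iff_injective_fintypeLinearCombination.mp ha))
  have : (hull ℝ (Set.range a) : Set E) = L '' Set.Ici 0 := by
    ext x
    simp [mem_hull_range_iff, L, Fintype.linearCombination_apply]
  rw [this]
  exact hL.isClosedMap _ isClosed_Ici

theorem isClosed_hull_image_finset (a : ι → E) (s : Finset ι) :
    IsClosed (hull ℝ (a '' s) : Set E) := by
  classical
  induction s using Finset.strongInduction with
  | H s ih =>
  by_cases hs : LinearIndepOn ℝ a s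
  · rw [Set.image_eq_range]
    exact isClosed_hull_range_of_linearIndependent hs
  · have : (hull ℝ (a '' s) : Set E) = ⋃ j ∈ s, (hull ℝ (a '' ↑(s.erase j)) : Set E) := by
      refine subset_antisymm (fun x hx => ?_) (Set.iUnion₂_subset fun j _ => ?_)
      · simpa using exists_mem_hull_image_erase_of_not_linearIndepOn hs hx
      · exact Submodule.span_mono (Set.image_mono (by simp))
    rw [this]
    exact isClosed_biUnion_finset fun j hj => ih _ (erase_ssubset hj)

theorem isClosed_hull_range [Fintype ι] (a : ι → E) : IsClosed (hull ℝ (Set.range a) : Set E) := by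
  simpa using isClosed_hull_image_finset a univ

end PointedCone

namespace Matrix

variable {m n : Type*} [Fintype m] [Fintype n]

theorem exists_nonneg_vecMul_of_not_exists_mulVec_eq (N : Matrix m n ℝ) (b : m → ℝ)
    (h : ¬ ∃ μ, 0 ≤ μ ∧ N *ᵥ μ = b) : ∃ y, 0 ≤ y ᵥ* N ∧ y ⬝ᵥ b < 0 := by
  classical
  let C : ProperCone ℝ (m → ℝ) :=
    ⟨PointedCone.hull ℝ (Set.range Nᵀ), PointedCone.isClosed_hull_range Nᵀ⟩
  have hb : b ∉ C := fun hb => h <| by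
    obtain ⟨μ, hμ, hμb⟩ := PointedCone.mem_hull_range_iff.mp hb
    exact ⟨μ, hμ, by simpa [mulVec_eq_sum] using hμb⟩
  obtain ⟨f, hfC, hfb⟩ := C.hyperplane_separation_point hb
  have hf : ∀ v, f v = (fun i => f (Pi.single i 1)) ⬝ᵥ v := fun v => by
    conv_lhs => rw [pi_eq_sum_univ' v]
    simp [dotProduct, mul_comm]
  refine ⟨fun i => f (Pi.single i 1), fun j => ?_, by rwa [← hf]⟩
  have := hfC _ (PointedCone.subset_hull ⟨j, rfl⟩)
  rw [hf] at this
  simpa [vecMul, dotProduct] using this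

theorem exists_nonneg_vecMul_nonpos_of_not_exists_le_mulVec (M : Matrix m n ℝ) (b : m → ℝ)
    (h : ¬ ∃ w, 0 ≤ w ∧ b ≤ M *ᵥ w) : ∃ y, 0 ≤ y ∧ y ᵥ* M ≤ 0 ∧ 0 < y ⬝ᵥ b := by
  classical
  obtain ⟨y, hyN, hyb⟩ := exists_nonneg_vecMul_of_not_exists_mulVec_eq
    (fromCols M (-1 : Matrix m m ℝ)) b fun ⟨μ, hμ, hμb⟩ => h ⟨μ ∘ Sum.inl, fun j => hμ _,
      fun i => by simpa [← hμb, neg_mulVec] using hμ (Sum.inr i)⟩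
  refine ⟨-y, fun i => ?_, fun j => ?_, by simpa using hyb⟩
  · simpa [vecMul_neg] using hyN (Sum.inr i)
  · simpa [neg_vecMul] using hyN (Sum.inl j)

end Matrix

namespace MDP

section Transitions

variable {S A : Type} [Fintype S] [Fintype A] (M : MDP S A)

theorem prob_nonneg (s : S) (a : A) (t : S) : 0 ≤ M.prob s a t := by
  unfold prob
  cases h : M.trans s a with
  | none => simp
  | some f => simpa using M.nonneg' s a f h t

theorem sum_prob_eq_one {s : S} {a : A} (h : M.enabled s a) : ∑ t, M.prob s a t = 1 := by
  obtain ⟨f, hf⟩ := Option.isSome_iff_exists.mp h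
  simpa [prob, hf] using M.sum_one' s a f hf

theorem eq_of_prob_ne_zero_of_prob_self_eq_one {s : S} {a : A} (ha : M.enabled s a)
    (hs : M.prob s a s = 1) {t : S} (ht : M.prob s a t ≠ 0) : t = s := by
  by_contra hts
  have := add_le_sum (fun t _ => M.prob_nonneg s a t) (mem_univ s) (mem_univ t) (Ne.symm hts)
  rw [sum_prob_eq_one M ha, hs] at this
  exact ht (le_antisymm (by linarith) (M.prob_nonneg s a t))

variable {M} in
theorem Scheduler.sum_choice_mul_le (σ : Scheduler M) (h : List (S × A)) (s : S)
    {g : A → ℝ} {c : ℝ} (hg : ∀ a, M.enabled s a → g a ≤ c) :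
    ∑ a, σ.choice h s a * g a ≤ c :=
  calc ∑ a, σ.choice h s a * g a ≤ ∑ a, σ.choice h s a * c := sum_le_sum fun a _ => by
        by_cases hσ : σ.choice h s a = 0
        · simp [hσ]
        · exact mul_le_mul_of_nonneg_left (hg a (σ.choice_support h s a hσ)) (σ.choice_nonneg h s a)
    _ = c := by rw [← sum_mul, σ.choice_sum_one, one_mul]

end Transitions

section Reachability

variable {S A : Type} [Fintype S] [Fintype A] [DecidableEq S] {M : MDP S A} (σ : Scheduler M)
  {G : Finset S}

theorem reachAux_succ_of_notMem {s : S} (hs : s ∉ G) (n : ℕ) (h : List (S × A)) :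
    reachAux M σ G (n + 1) h s =
      ∑ a, σ.choice h s a * ∑ t, M.prob s a t * reachAux M σ G n (h ++ [(s, a)]) t := by
  simp [reachAux, hs]

theorem reachAux_of_mem {s : S} (hs : s ∈ G) (n : ℕ) (h : List (S × A)) :
    reachAux M σ G n h s = 1 := by
  cases n <;> simp [reachAux, hs]

theorem reachAux_nonneg (n : ℕ) : ∀ h s, 0 ≤ reachAux M σ G n h s := by
  induction n with
  | zero => intro h s; unfold reachAux; positivity
  | succ n ih =>
    intro h s
    by_cases hs : s ∈ G
    · simp [reachAux_of_mem σ hs]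
    · rw [reachAux_succ_of_notMem σ hs]
      exact sum_nonneg fun a _ => mul_nonneg (σ.choice_nonneg h s a)
        (sum_nonneg fun t _ => mul_nonneg (M.prob_nonneg s a t) (ih _ t))

theorem reachAux_le_one (n : ℕ) : ∀ h s, reachAux M σ G n h s ≤ 1 := by
  induction n with
  | zero => intro h s; unfold reachAux; split_ifs <;> norm_num
  | succ n ih =>
    intro h s
    by_cases hs : s ∈ G
    · simp [reachAux_of_mem σ hs]
    · rw [reachAux_succ_of_notMem σ hs]
      refine σ.sum_choice_mul_le h s fun a ha => ?_
      calc ∑ t, M.prob s a t * reachAux M σ G n (h ++ [(s, a)]) t ≤ ∑ t, M.prob s a t :=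
            sum_le_sum fun t _ => mul_le_of_le_one_right (M.prob_nonneg s a t) (ih _ t)
        _ = 1 := M.sum_prob_eq_one ha

theorem reachAux_le_succ (n : ℕ) : ∀ h s, reachAux M σ G n h s ≤ reachAux M σ G (n + 1) h s := by
  induction n with
  | zero =>
    intro h s
    by_cases hs : s ∈ G
    · simp [reachAux_of_mem σ hs]
    · simpa [reachAux, hs] using reachAux_nonneg σ (G := G) 1 h s
  | succ n ih =>
    intro h s
    by_cases hs : s ∈ G
    · simp [reachAux_of_mem σ hs]
    · rw [reachAux_succ_of_notMem σ hs, reachAux_succ_of_notMem σ hs]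
      gcongr with a _ t _
      · exact σ.choice_nonneg h s a
      · exact M.prob_nonneg s a t
      · exact ih _ t

theorem tendsto_reachAux (s : S) :
    Filter.Tendsto (fun n => reachAux M σ G n [] s) Filter.atTop
      (nhds (prReachFrom M σ G s)) :=
  tendsto_atTop_ciSup (monotone_nat_of_le_succ fun n => reachAux_le_succ σ n [] s)
    ⟨1, Set.forall_mem_range.mpr fun n => reachAux_le_one σ n [] s⟩

theorem prReachFrom_nonneg (s : S) : 0 ≤ prReachFrom M σ G s :=
  Real.iSup_nonneg fun n => reachAux_nonneg σ n [] s

theorem prReachFrom_of_mem {s : S} (hs : s ∈ G) : prReachFrom M σ G s = 1 := by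
  simp [prReachFrom, reachAux_of_mem σ hs]

theorem reachAux_eq_zero_of_trap {N : Set S}
    (hN : ∀ s ∈ N, ∀ a, M.enabled s a → ∀ t, M.prob s a t ≠ 0 → t ∈ N) (hNG : ∀ s ∈ N, s ∉ G)
    (n : ℕ) : ∀ h, ∀ s ∈ N, reachAux M σ G n h s = 0 := by
  induction n with
  | zero => intro h s hs; simp [reachAux, hNG s hs]
  | succ n ih =>
    intro h s hs
    rw [reachAux_succ_of_notMem σ (hNG s hs)]
    refine sum_eq_zero fun a _ => ?_
    by_cases hσ : σ.choice h s a = 0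
    · simp [hσ]
    refine mul_eq_zero_of_right _ (sum_eq_zero fun t _ => ?_)
    by_cases hP : M.prob s a t = 0
    · simp [hP]
    · rw [ih _ t (hN s hs a (σ.choice_support h s a hσ) t hP), mul_zero]

theorem reachAux_of_absorbing {s : S} (habs : ∀ a, M.enabled s a → M.prob s a s = 1) (n : ℕ)
    (h : List (S × A)) : reachAux M σ G n h s = if s ∈ G then 1 else 0 := by
  split_ifs with hs
  · exact reachAux_of_mem σ hs n h
  · refine reachAux_eq_zero_of_trap σ (N := {s}) (fun s' hs' a ha t ht => ?_) (by simpa) n h s rfl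
    rw [Set.mem_singleton_iff] at hs' ⊢
    subst hs'
    exact M.eq_of_prob_ne_zero_of_prob_self_eq_one ha (habs a ha) ht

theorem reachAux_eq_of_memoryless (hσ : ∀ h, σ.choice h = σ.choice []) (n : ℕ) :
    ∀ h s, reachAux M σ G n h s = reachAux M σ G n [] s := by
  induction n with
  | zero => intro h s; rfl
  | succ n ih => intro h s; simp only [reachAux, hσ h, ih (h ++ _), ih ([] ++ _)]

theorem prReachFrom_eq_of_memoryless (hσ : ∀ h, σ.choice h = σ.choice []) {s : S} (hs : s ∉ G) :
    prReachFrom M σ G s =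
      ∑ a, σ.choice [] s a * ∑ t, M.prob s a t * prReachFrom M σ G t := by
  have hstep : ∀ n, reachAux M σ G (n + 1) [] s =
      ∑ a, σ.choice [] s a * ∑ t, M.prob s a t * reachAux M σ G n [] t := fun n => by
    simp only [reachAux_succ_of_notMem σ hs, reachAux_eq_of_memoryless σ hσ n ([] ++ _)]
  refine tendsto_nhds_unique ((tendsto_reachAux σ s).comp (Filter.tendsto_add_atTop_nat 1)) ?_
  simp only [Function.comp_def, hstep]
  exact tendsto_finsetSum _ fun a _ => (tendsto_finsetSum _ fun t _ =>
    (tendsto_reachAux σ t).const_mul _).const_mul _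

end Reachability

section Superharmonic

variable {S A : Type} [Fintype S] [Fintype A] [DecidableEq S] {M : MDP S A} {F : Finset S}

theorem nonneg_of_superharmonic (hform : ∀ s, ∃ σ : Scheduler M, 0 < prReachFrom M σ F s)
    {u : S → ℝ} (hF : ∀ s ∈ F, 0 ≤ u s)
    (hu : ∀ s ∉ F, ∀ a, M.enabled s a → ∑ t, M.prob s a t * u t ≤ u s) : 0 ≤ u := by
  intro s
  by_contra! hneg
  obtain ⟨s₀, -, hmin⟩ := univ.exists_min_image u ⟨s, mem_univ s⟩
  have hm : u s₀ < 0 := (hmin s (mem_univ s)).trans_lt hneg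
  -- the states where `u` attains its negative minimum form a trap that avoids `F`
  have hNF : ∀ t ∈ {t | u t = u s₀}, t ∉ F := fun t ht htF => by
    linarith [hF t htF, show u t = u s₀ from ht]
  have htrap : ∀ t ∈ {t | u t = u s₀}, ∀ a, M.enabled t a → ∀ t', M.prob t a t' ≠ 0 →
      t' ∈ {t | u t = u s₀} := by
    intro t ht a ha t' hP
    have hterm : ∀ t' ∈ univ, 0 ≤ M.prob t a t' * (u t' - u s₀) := fun t' _ =>
      mul_nonneg (M.prob_nonneg t a t') (sub_nonneg.mpr (hmin t' (mem_univ t')))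
    have hsum : ∑ t', M.prob t a t' * (u t' - u s₀) = 0 := by
      refine le_antisymm ?_ (sum_nonneg hterm)
      have := hu t (hNF t ht) a ha
      simp only [mul_sub, sum_sub_distrib, ← sum_mul, M.sum_prob_eq_one ha, one_mul]
      linarith [show u t = u s₀ from ht]
    have := (sum_eq_zero_iff_of_nonneg hterm).mp hsum t' (mem_univ t')
    exact sub_eq_zero.mp ((mul_eq_zero.mp this).resolve_left hP)
  obtain ⟨σ, hσ⟩ := hform s₀
  simp [prReachFrom, reachAux_eq_zero_of_trap σ htrap hNF _ _ s₀ rfl] at hσ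

theorem sum_mul_reachAux_le (habs : ∀ s ∈ F, ∀ a, M.enabled s a → M.prob s a s = 1) {k : ℕ}
    {G : Fin k → Finset S} (hG : ∀ i, G i ⊆ F) {z : Fin k → ℝ} {u : S → ℝ} (hu0 : 0 ≤ u)
    (huF : ∀ s ∈ F, u s = ∑ i, z i * if s ∈ G i then 1 else 0)
    (hu : ∀ s ∉ F, ∀ a, M.enabled s a → ∑ t, M.prob s a t * u t ≤ u s)
    (σ : Scheduler M) (n : ℕ) : ∀ h s, ∑ i, z i * reachAux M σ (G i) n h s ≤ u s := by
  induction n with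
  | zero =>
    intro h s
    by_cases hs : s ∈ F
    · simp [huF s hs, reachAux_of_absorbing σ (habs s hs)]
    · have : ∀ i, s ∉ G i := fun i hsG => hs (hG i hsG)
      simpa [reachAux, this] using hu0 s
  | succ n ih =>
    intro h s
    by_cases hs : s ∈ F
    · simp [huF s hs, reachAux_of_absorbing σ (habs s hs)]
    have hsG : ∀ i, s ∉ G i := fun i hsG => hs (hG i hsG)
    calc ∑ i, z i * reachAux M σ (G i) (n + 1) h s
        = ∑ a, σ.choice h s a * ∑ t, M.prob s a t *
            ∑ i, z i * reachAux M σ (G i) n (h ++ [(s, a)]) t := by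
          simp only [reachAux_succ_of_notMem σ (hsG _), mul_sum]
          rw [sum_comm]
          refine sum_congr rfl fun a _ => ?_
          rw [sum_comm]
          refine sum_congr rfl fun t _ => sum_congr rfl fun i _ => by ring
      _ ≤ u s := σ.sum_choice_mul_le h s fun a ha =>
          (sum_le_sum fun t _ => mul_le_mul_of_nonneg_left (ih _ t) (M.prob_nonneg s a t)).trans
            (hu s hs a ha)

end Superharmonic

section Weights

variable {S A : Type} [Fintype S] [Fintype A] (M : MDP S A)

open Classical in
noncomputable def Scheduler.ofWeights (y : S × A → ℝ) (hy : 0 ≤ y)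
    (hsupp : ∀ p, y p ≠ 0 → M.enabled p.1 p.2) : Scheduler M where
  choice _ s a :=
    if ∑ a', y (s, a') = 0 then if a = (M.exists_enabled s).choose then 1 else 0
    else y (s, a) / ∑ a', y (s, a')
  choice_nonneg _ s a := by
    split_ifs
    · norm_num
    · norm_num
    · exact div_nonneg (hy _) (sum_nonneg fun _ _ => hy _)
  choice_sum_one _ s := by
    split_ifs with h
    · simp
    · rw [← sum_div, div_self h]
  choice_support _ s a ha := by
    split_ifs at ha with h h'
    · exact h' ▸ (M.exists_enabled s).choose_spec
    · exact absurd rfl ha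
    · exact hsupp (s, a) fun h0 => ha (by rw [h0, zero_div])

variable {M}

theorem Scheduler.sum_mul_ofWeights_choice (y : S × A → ℝ) (hy : 0 ≤ y)
    (hsupp : ∀ p, y p ≠ 0 → M.enabled p.1 p.2) (h : List (S × A)) (s : S) (a : A) :
    (∑ a', y (s, a')) * (Scheduler.ofWeights M y hy hsupp).choice h s a = y (s, a) := by
  by_cases h0 : ∑ a', y (s, a') = 0
  · have := (sum_eq_zero_iff_of_nonneg fun a' _ => hy (s, a')).mp h0 a (mem_univ a)
    rw [h0, zero_mul, this]
  · simp only [Scheduler.ofWeights, if_neg h0]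
    field_simp

variable [DecidableEq S]

theorem sum_mul_sum_prob_le_mul_prReach_ofWeights {F G : Finset S} (hGF : G ⊆ F)
    (hinit : M.init ∉ F) {y : S × A → ℝ} (hy : 0 ≤ y)
    (hsupp : ∀ p, y p ≠ 0 → p.1 ∉ F ∧ M.enabled p.1 p.2) {v : ℝ}
    (hflow : ∀ t ∉ F, ∑ a, y (t, a) ≤ ∑ p, y p * M.prob p.1 p.2 t + if t = M.init then v else 0) :
    ∑ p, y p * ∑ t ∈ G, M.prob p.1 p.2 t ≤
      v * prReach M (Scheduler.ofWeights M y hy fun p hp => (hsupp p hp).2) G := by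
  set σ := Scheduler.ofWeights M y hy fun p hp => (hsupp p hp).2
  set r := prReachFrom M σ G
  set I : S → ℝ := fun t => ∑ p, y p * M.prob p.1 p.2 t

  have hyF : ∀ s ∈ F, ∀ a, y (s, a) = 0 := fun s hs a => by_contra fun h => (hsupp _ h).1 hs
  -- weighted by `r`, the outflow of `y` equals its inflow `I` (Bellman equation of `σ`)
  have hbal : ∀ s, (∑ a, y (s, a)) * r s = ∑ a, y (s, a) * ∑ t, M.prob s a t * r t := by
    intro s
    by_cases hs : s ∈ F
    · simp [hyF s hs]
    rw [show r s = ∑ a, σ.choice [] s a * ∑ t, M.prob s a t * r t from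
      prReachFrom_eq_of_memoryless σ (fun _ => rfl) fun h => hs (hGF h), mul_sum]
    exact sum_congr rfl fun a _ => by rw [← mul_assoc, Scheduler.sum_mul_ofWeights_choice]
  have hglob : ∑ t ∈ Fᶜ, (∑ a, y (t, a)) * r t = ∑ t, I t * r t := by
    rw [sum_subset (subset_univ _) fun s _ hs => by simp [hyF s (by simpa using hs)]]
    simp only [hbal, I, mul_sum, sum_mul]
    rw [← Fintype.sum_prod_type', sum_comm]
    exact sum_congr rfl fun t _ => sum_congr rfl fun p _ => by rw [mul_assoc]
  calc ∑ p, y p * ∑ t ∈ G, M.prob p.1 p.2 t = ∑ t ∈ G, I t * r t := by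
        simp only [I, sum_mul, mul_sum]
        rw [sum_comm]
        refine sum_congr rfl fun t ht => sum_congr rfl fun p _ => ?_
        rw [show r t = 1 from prReachFrom_of_mem σ ht, mul_one]
    _ ≤ ∑ t ∈ F, I t * r t := sum_le_sum_of_subset_of_nonneg hGF fun t _ _ =>
        mul_nonneg (sum_nonneg fun p _ => mul_nonneg (hy p) (M.prob_nonneg _ _ t))
          (prReachFrom_nonneg σ t)
    _ = ∑ t ∈ Fᶜ, (∑ a, y (t, a)) * r t - ∑ t ∈ Fᶜ, I t * r t := by
        rw [hglob, ← sum_add_sum_compl F]; ring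
    _ ≤ ∑ t ∈ Fᶜ, (I t + if t = M.init then v else 0) * r t - ∑ t ∈ Fᶜ, I t * r t := by
        gcongr with t ht
        · exact prReachFrom_nonneg σ t
        · exact hflow t (mem_compl.mp ht)
    _ = v * prReach M σ G := by
        simp [add_mul, sum_add_distrib, ite_mul, hinit, prReach, r]

end Weights

section Certificates

open Matrix

variable {S A : Type} [Fintype S] [Fintype A] [DecidableEq S] {M : MDP S A} {F : Finset S}
  {k : ℕ} {G : Fin k → Finset S} {lam : Fin k → ℝ}

variable (M F G lam) in
/-- The paper's `A x ≥ T z` and `x(s_in) ≤ λᵀz`: the row of `A` at an enabled pair `(s, a)`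
outside `F` is `δ_s - P(s, a, ·)` restricted to `Fᶜ`, and `T(s, a)ᵢ = P(s, a, Gᵢ)`. -/
def IsReachCertificate (x : S → ℝ) (z : Fin k → ℝ) : Prop :=
  (∀ i, 0 ≤ z i) ∧ z ≠ 0 ∧
    (∀ p : S × A, p.1 ∉ F → M.enabled p.1 p.2 →
      ∑ i, (∑ t ∈ G i, M.prob p.1 p.2 t) * z i ≤
        ∑ s ∈ Fᶜ, ((if p.1 = s then (1 : ℝ) else 0) - M.prob p.1 p.2 s) * x s) ∧
    x M.init ≤ ∑ i, lam i * z i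

theorem sum_prob_mul_piecewise (hG : ∀ i, G i ⊆ F) (z : Fin k → ℝ) (x : S → ℝ) (s : S) (a : A) :
    ∑ t, M.prob s a t * (if t ∈ F then ∑ i, z i * (if t ∈ G i then 1 else 0) else x t) =
      ∑ i, (∑ t ∈ G i, M.prob s a t) * z i + ∑ t ∈ Fᶜ, M.prob s a t * x t := by
  rw [← sum_add_sum_compl F]
  congr 1
  · rw [sum_congr rfl fun t ht => by rw [if_pos ht, mul_sum], sum_comm]
    refine sum_congr rfl fun i _ => ?_
    simp only [mul_ite, mul_one, mul_zero, ← sum_filter, sum_mul]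
    rw [filter_mem_eq_inter, inter_eq_right.mpr (hG i)]
  · exact sum_congr rfl fun t ht => by rw [if_neg (mem_compl.mp ht)]

theorem exists_prReach_le_of_isReachCertificate
    (habs : ∀ s ∈ F, ∀ a, M.enabled s a → M.prob s a s = 1)
    (hform : ∀ s, ∃ σ : Scheduler M, 0 < prReachFrom M σ F s) (hinit : M.init ∉ F)
    (hG : ∀ i, G i ⊆ F) {x : S → ℝ} {z : Fin k → ℝ} (hc : IsReachCertificate M F G lam x z)
    (σ : Scheduler M) : ∃ i, prReach M σ (G i) ≤ lam i := by
  obtain ⟨hz, hz0, hA, hx⟩ := hc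
  set u : S → ℝ := fun t => if t ∈ F then ∑ i, z i * (if t ∈ G i then 1 else 0) else x t
  have huF : ∀ s ∈ F, u s = ∑ i, z i * if s ∈ G i then 1 else 0 := fun s hs => if_pos hs
  have hu : ∀ s ∉ F, ∀ a, M.enabled s a → ∑ t, M.prob s a t * u t ≤ u s := by
    intro s hs a ha
    have := hA (s, a) hs ha
    simp only [sub_mul, sum_sub_distrib, ite_mul, one_mul, zero_mul, sum_ite_eq,
      mem_compl.mpr hs, if_true] at this
    rw [sum_prob_mul_piecewise hG, show u s = x s from if_neg hs]
    linarith
  have hu0 : 0 ≤ u := nonneg_of_superharmonic hform (fun s hs => by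
      rw [huF s hs]; exact sum_nonneg fun i _ => mul_nonneg (hz i) (by split_ifs <;> norm_num)) hu
  have hbound : ∑ i, z i * prReach M σ (G i) ≤ x M.init := by
    refine le_of_tendsto' (tendsto_finsetSum _ fun i _ => (tendsto_reachAux σ M.init).const_mul _)
      fun n => ?_
    simpa [u, hinit] using sum_mul_reachAux_le habs hG hu0 huF hu σ n [] M.init
  by_contra! hlt
  obtain ⟨j, hj⟩ := Function.ne_iff.mp hz0
  have : ∑ i, lam i * z i < ∑ i, z i * prReach M σ (G i) := by
    refine sum_lt_sum (fun i _ => ?_) ⟨j, mem_univ j, ?_⟩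
    · rw [mul_comm]; exact mul_le_mul_of_nonneg_left (hlt i).le (hz i)
    · rw [mul_comm]; exact mul_lt_mul_of_pos_left (hlt j) ((hz j).lt_of_ne' hj)
  linarith

variable (M F G lam) in
open Classical in
/-- The certificate conditions as `b ≤ certMatrix *ᵥ (x, z)` with `b = (0, 1, 0)`: one row per
state-action pair (identically zero unless the pair is enabled outside `F`), then `∑ zᵢ ≥ 1`,
which normalises `z ≠ 0`, and `λᵀz - x(s_in) ≥ 0`. -/
noncomputable def certMatrix : Matrix ((S × A) ⊕ Fin 2) (S ⊕ Fin k) ℝ :=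
  Matrix.fromBlocks
    (Matrix.of fun p t => if p.1 ∉ F ∧ M.enabled p.1 p.2 ∧ t ∉ F then
      (if p.1 = t then 1 else 0) - M.prob p.1 p.2 t else 0)
    (Matrix.of fun p i => if p.1 ∉ F ∧ M.enabled p.1 p.2 then -∑ t ∈ G i, M.prob p.1 p.2 t else 0)
    (Matrix.of ![0, fun t => if t = M.init then -1 else 0])
    (Matrix.of ![1, lam])

theorem isReachCertificate_of_le_certMatrix_mulVec {w : S ⊕ Fin k → ℝ} (hw : 0 ≤ w)
    (h : (Sum.elim 0 ![1, 0] : (S × A) ⊕ Fin 2 → ℝ) ≤ certMatrix M F G lam *ᵥ w) :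
    IsReachCertificate M F G lam (w ∘ Sum.inl) (w ∘ Sum.inr) := by
  classical
  refine ⟨fun i => hw _, fun hz => ?_, fun p hp ha => ?_, ?_⟩
  · have := h (Sum.inr 0)
    simp [certMatrix, mulVec, dotProduct, show ∀ i, w (Sum.inr i) = 0 from congrFun hz] at this
    linarith
  · have := h (Sum.inl p)
    simpa [certMatrix, mulVec, dotProduct, hp, ha, sum_ite, filter_not, ← compl_eq_univ_sdiff]
      using this
  · simpa [certMatrix, mulVec, dotProduct] using h (Sum.inr 1)

theorem exists_flow_of_not_exists_isReachCertificate
    (h : ¬ ∃ x z, IsReachCertificate M F G lam x z) :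
    ∃ (y : S × A → ℝ) (v : ℝ), 0 ≤ y ∧ (∀ p, y p ≠ 0 → p.1 ∉ F ∧ M.enabled p.1 p.2) ∧ 0 ≤ v ∧
      (∀ t ∉ F, ∑ a, y (t, a) ≤ ∑ p, y p * M.prob p.1 p.2 t + if t = M.init then v else 0) ∧
      ∀ i, v * lam i < ∑ p, y p * ∑ t ∈ G i, M.prob p.1 p.2 t := by
  classical
  obtain ⟨η, hη, hηM, hηb⟩ := exists_nonneg_vecMul_nonpos_of_not_exists_le_mulVec
    (certMatrix M F G lam) (Sum.elim 0 ![1, 0])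
    fun ⟨w, hw, hb⟩ => h ⟨_, _, isReachCertificate_of_le_certMatrix_mulVec hw hb⟩
  -- `y` and `v` are the multipliers of the pair rows and of the row `λᵀz ≥ x(s_in)`; the
  -- multiplier of `∑ zᵢ ≥ 1` is the slack that makes `v λᵢ < yᵀ P(·, Gᵢ)` strict
  set y : S × A → ℝ := fun p => if p.1 ∉ F ∧ M.enabled p.1 p.2 then η (Sum.inl p) else 0
  have hrestrict : ∀ f : S × A → ℝ,
      ∑ p, η (Sum.inl p) * (if p.1 ∉ F ∧ M.enabled p.1 p.2 then f p else 0) = ∑ p, y p * f p :=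
    fun f => sum_congr rfl fun p _ => by split_ifs <;> simp [y, *]
  refine ⟨y, η (Sum.inr 1), fun p => ?_, fun p hp => ?_, hη _, fun t ht => ?_, fun i => ?_⟩
  · dsimp only [y]
    split_ifs
    exacts [hη _, le_rfl]
  · by_contra hrel
    exact hp (if_neg hrel)
  · have := hηM (Sum.inl t)
    simp only [certMatrix, vecMul, dotProduct, Fintype.sum_sum_type, fromBlocks_apply₁₁,
      fromBlocks_apply₂₁, of_apply, ht, not_false_eq_true, and_true, Fin.sum_univ_two,
      cons_val_zero, cons_val_one, Pi.zero_apply, mul_zero, zero_add, hrestrict] at this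
    have hself : ∑ p, y p * (if p.1 = t then 1 else 0) = ∑ a, y (t, a) := by
      rw [Fintype.sum_prod_type, sum_comm]
      simp
    simp only [mul_sub, sum_sub_distrib, hself] at this
    split_ifs at this ⊢ <;> linarith
  · have := hηM (Sum.inr i)
    simp only [certMatrix, vecMul, dotProduct, Fintype.sum_sum_type, fromBlocks_apply₁₂,
      fromBlocks_apply₂₂, of_apply, Fin.sum_univ_two, cons_val_zero, cons_val_one, Pi.one_apply,
      Pi.zero_apply, Sum.elim_inl, Sum.elim_inr, mul_one, mul_zero, sum_const_zero, zero_add,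
      add_zero, hrestrict, mul_neg, sum_neg_distrib] at this hηb
    linarith

theorem exists_lt_prReach_of_not_exists_isReachCertificate (hinit : M.init ∉ F)
    (hG : ∀ i, G i ⊆ F) (h : ¬ ∃ x z, IsReachCertificate M F G lam x z) :
    ∃ σ : Scheduler M, ∀ i, lam i < prReach M σ (G i) := by
  obtain ⟨y, v, hy, hsupp, hv, hflow, hlt⟩ := exists_flow_of_not_exists_isReachCertificate h
  exact ⟨Scheduler.ofWeights M y hy fun p hp => (hsupp p hp).2, fun i => lt_of_mul_lt_mul_left
    ((hlt i).trans_le (sum_mul_sum_prob_le_mul_prReach_ofWeights (hG i) hinit hy hsupp hflow)) hv⟩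

end Certificates

end MDP

/-- Farkas certificates for universally quantified disjunctive reachability queries with
non-strict upper bounds: every scheduler satisfies `⋁ᵢ Pr^σ(◇Gᵢ) ≤ λᵢ` iff there are
`x ∈ ℝ^S` and `z ≥ 0`, `z ≠ 0`, with `A x ≥ T z` and `x(s_in) ≤ λᵀ z`. -/
theorem forall_disj_reach_certificates_nonstrict {S A : Type} [Fintype S] [Fintype A]
    [DecidableEq S] (M : MDP S A) (F : Finset S)
    (habs : ∀ s ∈ F, ∀ a, M.enabled s a → M.prob s a s = 1)
    (hform : ∀ s, ∃ σ : MDP.Scheduler M, 0 < MDP.prReachFrom M σ F s)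
    (hinit : M.init ∉ F)
    {k : ℕ} (G : Fin k → Finset S) (hG : ∀ i, G i ⊆ F) (lam : Fin k → ℝ) :
    (∀ σ : MDP.Scheduler M, ∃ i, MDP.prReach M σ (G i) ≤ lam i) ↔
      ∃ (x : S → ℝ) (z : Fin k → ℝ),
        (∀ i, 0 ≤ z i) ∧ z ≠ 0 ∧
        (∀ p : S × A, p.1 ∉ F → M.enabled p.1 p.2 →
          ∑ i, (∑ t ∈ G i, M.prob p.1 p.2 t) * z i ≤
            ∑ s ∈ Fᶜ, ((if p.1 = s then (1 : ℝ) else 0) - M.prob p.1 p.2 s) * x s) ∧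
        x M.init ≤ ∑ i, lam i * z i := by
  refine ⟨fun h => ?_, fun ⟨x, z, hc⟩ σ =>
    MDP.exists_prReach_le_of_isReachCertificate habs hform hinit hG hc σ⟩
  by_contra hnc
  obtain ⟨σ, hσ⟩ := MDP.exists_lt_prReach_of_not_exists_isReachCertificate hinit hG hnc
  obtain ⟨i, hi⟩ := h σ
  exact (hσ i).not_ge hi
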